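/- Let r ≥ 1 and let z = (z₀⁽¹⁾, z₁⁽¹⁾, z₀⁽²⁾, z₁⁽²⁾) ∈ Mat(2r × 4r, ℂ) be written in blocks in Mat(2r × r, ℂ), and assume det(z₀⁽¹⁾ | z₁⁽¹⁾) ≠ 0, det(z₀⁽²⁾ | z₁⁽²⁾) ≠ 0 and det(z₀⁽¹⁾ | z₀⁽²⁾) ≠ 0. Then there exist g ∈ GL(2r, ℂ), h ∈ H_{(2,2)}, and x ∈ GL(r, ℂ) such that g · z · h is the 2r×4r matrix with block rows (1_r, 0, 0, 1_r) and (0, x, 1_r, 0). -/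

import Mathlib

/-!
With `A = (z₀⁽¹⁾ | z₀⁽²⁾)`, left multiplication by `A⁻¹` turns the block columns into
`(1; 0), (a; b), (0; 1), (c; d)`, and the two remaining determinant conditions become
`det b ≠ 0` and `det c ≠ 0`. Then `g = diag(c⁻¹, 1) A⁻¹` together with `h₀ = c`, `h₁ = -a c`,
`k₀ = 1`, `k₁ = -d` produces the normal form with `x = b c`.
-/

open Matrix

/-- The `2r × nr` matrix assembled from `n` block columns of size `2r × r`. -/
def ofBlockCols (r n : ℕ) (z : Fin n → Matrix (Fin r ⊕ Fin r) (Fin r) ℂ) :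
    Matrix (Fin r ⊕ Fin r) (Fin n × Fin r) ℂ :=
  Matrix.of fun i jk => z jk.1 i jk.2

/-- The `nr × nr` matrix assembled from an `n × n` array of `r × r` blocks. -/
def ofBlockMat (r n : ℕ) (H : Fin n → Fin n → Matrix (Fin r) (Fin r) ℂ) :
    Matrix (Fin n × Fin r) (Fin n × Fin r) ℂ :=
  Matrix.of fun jk lk => H jk.1 lk.1 jk.2 lk.2
lemma fromRows_add_fromRows {R m₁ m₂ n : Type*} [Add R] (A₁ B₁ : Matrix m₁ n R)
    (A₂ B₂ : Matrix m₂ n R) :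
    fromRows A₁ A₂ + fromRows B₁ B₂ = fromRows (A₁ + B₁) (A₂ + B₂) := by
  ext (_ | _) _ <;> rfl

section BlockDeterminants

variable {n α : Type*} [Fintype n] [DecidableEq n] [CommRing α]

lemma nonsing_inv_mul_fromCols {u v : Matrix (n ⊕ n) n α} (h : IsUnit (fromCols u v).det) :
    (fromCols u v)⁻¹ * u = fromRows 1 0 ∧ (fromCols u v)⁻¹ * v = fromRows 0 1 := by
  rw [← fromCols_ext_iff, ← mul_fromCols, nonsing_inv_mul _ h, fromCols_fromRows_eq_fromBlocks,
    fromBlocks_one]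

lemma det_fromCols_fromRows_one_zero (a b : Matrix n n α) :
    (fromCols (fromRows 1 0) (fromRows a b)).det = b.det := by
  rw [fromCols_fromRows_eq_fromBlocks, det_fromBlocks_zero₂₁, det_one, one_mul]

lemma det_fromCols_fromRows_zero_one (c d : Matrix n n α) :
    (fromCols (fromRows 0 1) (fromRows c d)).det =
      Equiv.Perm.sign (Equiv.sumComm n n) * c.det := by
  have h := det_permute (Equiv.sumComm n n) (fromCols (fromRows 0 1) (fromRows c d))
  rw [fromCols_fromRows_eq_fromBlocks, Equiv.sumComm_apply, fromBlocks_submatrix_sum_swap_left,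
    submatrix_id_id, det_fromBlocks_zero₂₁, det_one, one_mul] at h
  rw [fromCols_fromRows_eq_fromBlocks, h, ← mul_assoc, ← Int.cast_mul,
    ← Units.val_mul, Int.units_mul_self, Units.val_one, Int.cast_one, one_mul]

end BlockDeterminants

section BlockColumns

variable {r n : ℕ}

lemma mul_ofBlockCols (G : Matrix (Fin r ⊕ Fin r) (Fin r ⊕ Fin r) ℂ)
    (z : Fin n → Matrix (Fin r ⊕ Fin r) (Fin r) ℂ) :
    G * ofBlockCols r n z = ofBlockCols r n fun j => G * z j := by
  ext i ⟨j, k⟩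
  simp only [mul_apply, ofBlockCols, of_apply]

lemma ofBlockCols_mul_ofBlockMat (z : Fin n → Matrix (Fin r ⊕ Fin r) (Fin r) ℂ)
    (H : Fin n → Fin n → Matrix (Fin r) (Fin r) ℂ) :
    ofBlockCols r n z * ofBlockMat r n H = ofBlockCols r n fun j => ∑ l, z l * H l j := by
  ext i ⟨j, k⟩
  simp only [mul_apply, ofBlockCols, ofBlockMat, of_apply, Fintype.sum_prod_type, Matrix.sum_apply]

end BlockColumns

lemma exists_standard_cols_of_det_ne_zero {n α : Type*} [Fintype n] [DecidableEq n] [Field α]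
    (z : Fin 4 → Matrix (n ⊕ n) n α)
    (h01 : (fromCols (z 0) (z 1)).det ≠ 0)
    (h23 : (fromCols (z 2) (z 3)).det ≠ 0)
    (h02 : (fromCols (z 0) (z 2)).det ≠ 0) :
    ∃ a b c d : Matrix n n α, IsUnit b.det ∧ IsUnit c.det ∧
      (fun j => (fromCols (z 0) (z 2))⁻¹ * z j) =
        ![fromRows 1 0, fromRows a b, fromRows 0 1, fromRows c d] := by
  set A := fromCols (z 0) (z 2)
  have hA : IsUnit A.det := h02.isUnit
  obtain ⟨hz0, hz2⟩ := nonsing_inv_mul_fromCols hA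
  set a := toRows₁ (A⁻¹ * z 1)
  set b := toRows₂ (A⁻¹ * z 1)
  set c := toRows₁ (A⁻¹ * z 3)
  set d := toRows₂ (A⁻¹ * z 3)
  have hz1 : A⁻¹ * z 1 = fromRows a b := (fromRows_toRows _).symm
  have hz3 : A⁻¹ * z 3 = fromRows c d := (fromRows_toRows _).symm
  have det_eq (i j : Fin 4) :
      (fromCols (z i) (z j)).det = A.det * (fromCols (A⁻¹ * z i) (A⁻¹ * z j)).det := by
    rw [← mul_fromCols, ← det_mul, mul_nonsing_inv_cancel_left _ _ hA]
  refine ⟨a, b, c, d, ?_, ?_, ?_⟩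
  · rw [det_eq, hz0, hz1, det_fromCols_fromRows_one_zero] at h01
    exact (right_ne_zero_of_mul h01).isUnit
  · rw [det_eq, hz2, hz3, det_fromCols_fromRows_zero_one] at h23
    exact (right_ne_zero_of_mul (right_ne_zero_of_mul h23)).isUnit
  · funext j
    fin_cases j
    exacts [hz0, hz1, hz2, hz3]

lemma normal_form_partition_22_first_of_standard {r : ℕ} (a b c d : Matrix (Fin r) (Fin r) ℂ)
    (hc : IsUnit c.det) :
    (fromBlocks c⁻¹ 0 0 1 : Matrix (Fin r ⊕ Fin r) (Fin r ⊕ Fin r) ℂ) *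
        ofBlockCols r 4 ![fromRows 1 0, fromRows a b, fromRows 0 1, fromRows c d] *
        ofBlockMat r 4 ![![c, -(a * c), 0, 0], ![0, c, 0, 0], ![0, 0, 1, -d], ![0, 0, 0, 1]] =
      ofBlockCols r 4 ![fromRows 1 0, fromRows 0 (b * c), fromRows 0 1, fromRows 1 0] := by
  rw [mul_ofBlockCols, ofBlockCols_mul_ofBlockMat]
  congr 1
  funext j
  fin_cases j <;> simp [Fin.sum_univ_four, fromBlocks_mul_fromRows, fromRows_mul,
    fromRows_add_fromRows, nonsing_inv_mul _ hc, Matrix.mul_assoc]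

theorem normal_form_partition_22_first_general (r : ℕ)
    (z : Fin 4 → Matrix (Fin r ⊕ Fin r) (Fin r) ℂ)
    (h01 : (fromCols (z 0) (z 1)).det ≠ 0)
    (h23 : (fromCols (z 2) (z 3)).det ≠ 0)
    (h02 : (fromCols (z 0) (z 2)).det ≠ 0) :
    ∃ (g : GL (Fin r ⊕ Fin r) ℂ) (h₀ k₀ : GL (Fin r) ℂ)
      (h₁ k₁ : Matrix (Fin r) (Fin r) ℂ) (x : GL (Fin r) ℂ),
      (g : Matrix (Fin r ⊕ Fin r) (Fin r ⊕ Fin r) ℂ) * ofBlockCols r 4 z *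
          ofBlockMat r 4
            ![![(h₀ : Matrix (Fin r) (Fin r) ℂ), h₁, 0, 0],
              ![0, (h₀ : Matrix (Fin r) (Fin r) ℂ), 0, 0],
              ![0, 0, (k₀ : Matrix (Fin r) (Fin r) ℂ), k₁],
              ![0, 0, 0, (k₀ : Matrix (Fin r) (Fin r) ℂ)]] =
        ofBlockCols r 4
          ![fromRows 1 0, fromRows 0 (x : Matrix (Fin r) (Fin r) ℂ),
            fromRows 0 1, fromRows 1 0] := by
  set A := fromCols (z 0) (z 2)
  have hA : IsUnit A.det := h02.isUnit
  obtain ⟨a, b, c, d, hb, hc, hw⟩ := exists_standard_cols_of_det_ne_zero z h01 h23 h02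
  set D : Matrix (Fin r ⊕ Fin r) (Fin r ⊕ Fin r) ℂ := fromBlocks c⁻¹ 0 0 1
  have hD : IsUnit D.det := by
    rw [det_fromBlocks_zero₂₁, det_one, mul_one]
    exact isUnit_nonsing_inv_det c hc
  refine ⟨nonsingInvUnit (D * A⁻¹) ?_, nonsingInvUnit c hc, 1, -(a * c), -d,
    nonsingInvUnit (b * c) ?_, ?_⟩
  · rw [det_mul]
    exact hD.mul (isUnit_nonsing_inv_det A hA)
  · rw [det_mul]
    exact hb.mul hc
  · have key := normal_form_partition_22_first_of_standard a b c d hc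
    rw [← hw, ← mul_ofBlockCols, ← Matrix.mul_assoc] at key
    exact key

/-- Normal form lemma (form `x₁`) for `(m, N) = (2r, 4r)`, partition `λ = (2,2)`:
`z = (z₀⁽¹⁾, z₁⁽¹⁾, z₀⁽²⁾, z₁⁽²⁾)` with the stated nondegeneracy conditions can be
brought, by the action of `GL(2r, ℂ) × H_{(2,2)}`, to the normal form with block rows
`(1_r, 0, 0, 1_r)` and `(0, x, 1_r, 0)` with `x ∈ GL(r, ℂ)`. -/
theorem normal_form_partition_22_first (r : ℕ) (hr : 1 ≤ r)
    (z : Fin 4 → Matrix (Fin r ⊕ Fin r) (Fin r) ℂ)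
    (h01 : (fromCols (z 0) (z 1)).det ≠ 0)
    (h23 : (fromCols (z 2) (z 3)).det ≠ 0)
    (h02 : (fromCols (z 0) (z 2)).det ≠ 0) :
    ∃ (g : GL (Fin r ⊕ Fin r) ℂ) (h₀ k₀ : GL (Fin r) ℂ)
      (h₁ k₁ : Matrix (Fin r) (Fin r) ℂ) (x : GL (Fin r) ℂ),
      (g : Matrix (Fin r ⊕ Fin r) (Fin r ⊕ Fin r) ℂ) * ofBlockCols r 4 z *
          ofBlockMat r 4
            ![![(h₀ : Matrix (Fin r) (Fin r) ℂ), h₁, 0, 0],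
              ![0, (h₀ : Matrix (Fin r) (Fin r) ℂ), 0, 0],
              ![0, 0, (k₀ : Matrix (Fin r) (Fin r) ℂ), k₁],
              ![0, 0, 0, (k₀ : Matrix (Fin r) (Fin r) ℂ)]] =
        ofBlockCols r 4
          ![fromRows 1 0, fromRows 0 (x : Matrix (Fin r) (Fin r) ℂ),
            fromRows 0 1, fromRows 1 0] :=
  normal_form_partition_22_first_general r z h01 h23 h02
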